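/- arXiv:1006.3209 — 2 statements merged into one kernel-verified Lean document; each statement's English description precedes it below -/
import Mathlib

section
/- For a Hirzebruch–Jung continued fraction expansion n/a = [b_1, ..., b_l] (with n > a ≥ 1, gcd(n,a) = 1, and each b_i ≥ 2), and a' the inverse of a modulo n with 1 ≤ a' ≤ n-1, the invariant B := (a + a')/n + (b_1 + ... + b_l) satisfies B ≥ 3. -/
/-- Value of a Hirzebruch–Jung continued fraction `[b₁,…,b_l]`,
i.e. `b₁ - 1/(b₂ - 1/(… ))`, using the junk value `0⁻¹ = 0` for the empty list. -/
def hjVal : List ℤ → ℚ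
  | [] => 0
  | b :: l => (b : ℚ) - (hjVal l)⁻¹

/-!
A continued fraction of length at least two already has `∑ bᵢ ≥ 4`. A continued fraction `[b₁]`
of length one means `n = b₁ a`, so coprimality forces `a = 1` and `n = b₁ ≥ 2`; then
`B ≥ 2/n + n ≥ 3`, because `n² - 3n + 2 = (n - 1)(n - 2) ≥ 0`.
-/

@[simp]
lemma hjVal_singleton (k : ℤ) : hjVal [k] = k := by
  simp [hjVal]

lemma Nat.Coprime.eq_one_of_div_eq_intCast {n a : ℕ} {k : ℤ} (hcop : n.Coprime a) (ha : a ≠ 0)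
    (h : (n : ℚ) / a = k) : a = 1 := by
  have hnk : ((n : ℤ) : ℚ) = ((k * a : ℤ) : ℚ) := by
    push_cast
    rw [← h, div_mul_cancel₀ _ (by exact_mod_cast ha)]
  have hdvd : (a : ℤ) ∣ n := ⟨k, by rw [mul_comm]; exact_mod_cast hnk⟩
  exact hcop.symm.eq_one_of_dvd (Int.natCast_dvd_natCast.mp hdvd)

lemma three_le_two_div_add_self {x : ℚ} (hx : 2 ≤ x) : 3 ≤ 2 / x + x := by
  have hx0 : 0 < x := by linarith
  rw [div_add' _ _ _ hx0.ne', le_div_iff₀ hx0]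
  nlinarith

theorem stmt0_general (n a a' : ℕ) (ha : 1 ≤ a) (han : a < n)
    (hcop : Nat.Coprime n a)
    (ha'1 : 1 ≤ a')
    (b : List ℤ) (hb : ∀ x ∈ b, 2 ≤ x)
    (hcf : hjVal b = (n : ℚ) / (a : ℚ)) :
    3 ≤ ((a : ℚ) + (a' : ℚ)) / (n : ℚ) + (b.sum : ℚ) := by
  have hn : (0 : ℚ) < n := by exact_mod_cast (by omega : 0 < n)
  match b, hb, hcf with
  | [], _, hcf =>
    exact absurd hcf.symm (div_ne_zero hn.ne' (by positivity))
  | [k], hb, hcf =>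
    rw [hjVal_singleton] at hcf
    obtain rfl : a = 1 := hcop.eq_one_of_div_eq_intCast (by omega) hcf.symm
    have hk : (k : ℚ) = n := by simpa using hcf
    have h2n : (2 : ℚ) ≤ n := hk ▸ (by exact_mod_cast hb k (by simp))
    have ha' : (1 : ℚ) ≤ a' := by exact_mod_cast ha'1
    calc 3 ≤ 2 / (n : ℚ) + n := three_le_two_div_add_self h2n
      _ ≤ _ := by simp only [List.sum_singleton, hk, Nat.cast_one]; gcongr; linarith
  | k :: l :: rest, hb, _ =>
    have hsum : (rest.length + 2) • (2 : ℤ) ≤ (k :: l :: rest).sum :=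
      List.card_nsmul_le_sum _ 2 hb
    have h3 : (3 : ℚ) ≤ ((k :: l :: rest).sum : ℚ) := by
      rw [nsmul_eq_mul] at hsum; exact_mod_cast (by omega : (3 : ℤ) ≤ _)
    exact le_add_of_nonneg_of_le (by positivity) h3

theorem stmt0 (n a a' : ℕ) (ha : 1 ≤ a) (han : a < n)
    (hcop : Nat.Coprime n a)
    (ha'1 : 1 ≤ a') (ha'2 : a' ≤ n - 1) (hinv : a * a' ≡ 1 [MOD n])
    (b : List ℤ) (hb : ∀ x ∈ b, 2 ≤ x)
    (hcf : hjVal b = (n : ℚ) / (a : ℚ)) :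
    3 ≤ ((a : ℚ) + (a' : ℚ)) / (n : ℚ) + (b.sum : ℚ) :=
  stmt0_general n a a' ha han hcop ha'1 b hb hcf
end

section
/- If n/a = [b_1, ..., b_l] is the Hirzebruch–Jung continued fraction expansion of n/a (with n > a ≥ 1 coprime, all b_i ≥ 2), then the reversed sequence [b_l, ..., b_1] is the Hirzebruch–Jung continued fraction expansion of n/a', where a' is the inverse of a modulo n with 1 ≤ a' ≤ n-1. -/
open Matrix

def hjMatrix (b : ℤ) : Matrix (Fin 2) (Fin 2) ℤ := !![b, -1; 1, 0]

def hjProd (l : List ℤ) : Matrix (Fin 2) (Fin 2) ℤ := (l.map hjMatrix).prod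

def hjSign : Matrix (Fin 2) (Fin 2) ℤ := !![1, 0; 0, -1]

@[simp] lemma hjProd_nil : hjProd [] = 1 := rfl

@[simp] lemma hjProd_cons (b : ℤ) (l : List ℤ) : hjProd (b :: l) = hjMatrix b * hjProd l := rfl

lemma hjProd_cons_zero_zero (b : ℤ) (l : List ℤ) :
    hjProd (b :: l) 0 0 = b * hjProd l 0 0 - hjProd l 1 0 := by
  simp [hjMatrix, mul_apply, Fin.sum_univ_two, sub_eq_add_neg]

lemma hjProd_cons_one_zero (b : ℤ) (l : List ℤ) : hjProd (b :: l) 1 0 = hjProd l 0 0 := by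
  simp [hjMatrix, mul_apply, Fin.sum_univ_two]

lemma hjProd_append_singleton (l : List ℤ) (b : ℤ) :
    hjProd (l ++ [b]) = hjProd l * hjMatrix b := by
  simp [hjProd]

lemma det_hjProd (l : List ℤ) : (hjProd l).det = 1 := by
  induction l with
  | nil => simp
  | cons b l ih =>
    rw [hjProd_cons, det_mul, ih, hjMatrix, det_fin_two_of]
    ring

lemma hjSign_mul_self : hjSign * hjSign = 1 := by
  simp [hjSign, one_fin_two]

lemma hjMatrix_eq_conj_transpose (b : ℤ) : hjMatrix b = hjSign * (hjMatrix b)ᵀ * hjSign := by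
  rw [Matrix.mul_assoc]
  ext i j
  fin_cases i <;> fin_cases j <;> simp [hjSign, hjMatrix, mul_apply, Fin.sum_univ_two]

lemma hjProd_reverse (l : List ℤ) : hjProd l.reverse = hjSign * (hjProd l)ᵀ * hjSign := by
  induction l with
  | nil => simp [hjSign_mul_self]
  | cons b l ih =>
    rw [List.reverse_cons, hjProd_append_singleton, ih, hjMatrix_eq_conj_transpose b, hjProd_cons,
      transpose_mul]
    simp only [Matrix.mul_assoc]
    rw [← Matrix.mul_assoc hjSign hjSign, hjSign_mul_self, Matrix.one_mul]

lemma hjProd_reverse_zero_zero (l : List ℤ) : hjProd l.reverse 0 0 = hjProd l 0 0 := by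
  simp only [hjProd_reverse, mul_apply, Fin.sum_univ_two, hjSign]
  simp

lemma hjProd_reverse_one_zero (l : List ℤ) : hjProd l.reverse 1 0 = -hjProd l 0 1 := by
  simp only [hjProd_reverse, mul_apply, Fin.sum_univ_two, hjSign]
  simp

lemma hjProd_one_zero_nonneg_lt {l : List ℤ} (hl : ∀ x ∈ l, 2 ≤ x) :
    0 ≤ hjProd l 1 0 ∧ hjProd l 1 0 < hjProd l 0 0 := by
  induction l with
  | nil => simp
  | cons b l ih =>
    have hb : 2 ≤ b := hl b List.mem_cons_self
    obtain ⟨hq, hqp⟩ := ih fun x hx => hl x (List.mem_cons_of_mem b hx)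
    rw [hjProd_cons_zero_zero, hjProd_cons_one_zero]
    constructor <;> nlinarith

lemma hjProd_one_zero_pos {l : List ℤ} (hl : ∀ x ∈ l, 2 ≤ x) (hne : l ≠ []) :
    0 < hjProd l 1 0 := by
  obtain ⟨b, l, rfl⟩ := List.exists_cons_of_ne_nil hne
  obtain ⟨hq, hqp⟩ := hjProd_one_zero_nonneg_lt fun x hx => hl x (List.mem_cons_of_mem b hx)
  rw [hjProd_cons_one_zero]
  omega

lemma hjVal_eq_div {l : List ℤ} (hl : ∀ x ∈ l, 2 ≤ x) :
    hjVal l = (hjProd l 0 0 : ℚ) / (hjProd l 1 0 : ℚ) := by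
  induction l with
  | nil => simp [hjVal]
  | cons b l ih =>
    have hp : (hjProd l 0 0 : ℚ) ≠ 0 := by
      have := hjProd_one_zero_nonneg_lt fun x hx => hl x (List.mem_cons_of_mem b hx)
      exact_mod_cast (by omega : hjProd l 0 0 ≠ 0)
    rw [hjVal, ih fun x hx => hl x (List.mem_cons_of_mem b hx), hjProd_cons_zero_zero,
      hjProd_cons_one_zero, inv_div]
    push_cast
    field_simp

lemma Int.eq_of_mul_modEq_one {n a c d : ℤ} (hc : 0 ≤ c) (hcn : c < n) (hd : 0 ≤ d)
    (hdn : d < n) (hac : a * c ≡ 1 [ZMOD n]) (had : a * d ≡ 1 [ZMOD n]) : c = d := by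
  have hcd : c ≡ d [ZMOD n] :=
    calc c = c * 1 := (mul_one c).symm
      _ ≡ c * (a * d) [ZMOD n] := had.symm.mul_left c
      _ = a * c * d := by ring
      _ ≡ 1 * d [ZMOD n] := hac.mul_right d
      _ = d := one_mul d
  rwa [Int.ModEq, Int.emod_eq_of_lt hc hcn, Int.emod_eq_of_lt hd hdn] at hcd

theorem stmt1_general (n a a' : ℕ) (ha : 1 ≤ a) (han : a < n)
    (hcop : Nat.Coprime n a)
    (ha'2 : a' ≤ n - 1) (hinv : a * a' ≡ 1 [MOD n])
    (b : List ℤ) (hb : ∀ x ∈ b, 2 ≤ x)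
    (hcf : hjVal b = (n : ℚ) / (a : ℚ)) :
    hjVal b.reverse = (n : ℚ) / (a' : ℚ) := by
  have hne : b ≠ [] := by
    rintro rfl
    have : (0 : ℚ) < n / a := div_pos (by exact_mod_cast (by omega : 0 < n)) (by exact_mod_cast ha)
    simp [hjVal, ← hcf] at this
  have hdet := det_fin_two (hjProd b)
  rw [det_hjProd] at hdet
  obtain ⟨hp, hq⟩ : hjProd b 0 0 = n ∧ hjProd b 1 0 = a :=
    Rat.div_int_inj (hjProd_one_zero_pos hb hne) (by omega)
      (Int.isCoprime_iff_gcd_eq_one.mp ⟨hjProd b 1 1, -hjProd b 0 1, by linarith⟩) hcop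
      (by rw [← hjVal_eq_div hb, hcf]; push_cast; rfl)
  have hb' : ∀ x ∈ b.reverse, 2 ≤ x := by simpa using hb
  obtain ⟨hc, hcn⟩ := hjProd_one_zero_nonneg_lt hb'
  rw [hjProd_reverse_one_zero, hjProd_reverse_zero_zero, hp] at hcn
  rw [hjProd_reverse_one_zero] at hc
  have hinv' : -hjProd b 0 1 = a' :=
    Int.eq_of_mul_modEq_one (a := a) hc hcn (by positivity) (by omega)
      (Int.modEq_iff_dvd.mpr ⟨hjProd b 1 1, by rw [← hp, ← hq]; linarith⟩)
      (by exact_mod_cast Int.natCast_modEq_iff.mpr hinv)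
  rw [hjVal_eq_div hb', hjProd_reverse_zero_zero, hjProd_reverse_one_zero, hinv', hp]
  push_cast; rfl

theorem stmt1 (n a a' : ℕ) (ha : 1 ≤ a) (han : a < n)
    (hcop : Nat.Coprime n a)
    (ha'1 : 1 ≤ a') (ha'2 : a' ≤ n - 1) (hinv : a * a' ≡ 1 [MOD n])
    (b : List ℤ) (hb : ∀ x ∈ b, 2 ≤ x)
    (hcf : hjVal b = (n : ℚ) / (a : ℚ)) :
    hjVal b.reverse = (n : ℚ) / (a' : ℚ) :=
  stmt1_general n a a' ha han hcop ha'2 hinv b hb hcf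
end
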